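/- arXiv:2202.04515 — 4 statements merged into one kernel-verified Lean document; each statement's English description precedes it below -/
import Mathlib

section
/- Khintchine's inequality: let σ = (σ₁,…,σ_d) be independent Rademacher ±1 random variables and x ∈ ℝ^d. Then for every integer t ≥ 1, (E[|⟨σ,x⟩|^t])^{1/t} ≤ √t · ‖x‖₂. -/
/-!
Expanding `(S + a)^(2k) + (S - a)^(2k)` binomially and inducting on the dimension gives the
Gaussian-type moment bound `E⟨σ,x⟩^(2k) ≤ (2k-1)‼ ‖x‖₂^(2k)`; the step reduces to the
inequality `C(2k,2j) (2(k-j)-1)‼ ≤ (2k-1)‼ C(k,j)`, which follows from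
`(2n)! = (2n-1)‼ 2ⁿ n!`. For `t ≤ 2k ≤ t + 1` the power-mean inequality gives
`‖⟨σ,x⟩‖_t ≤ ‖⟨σ,x⟩‖_{2k}`, and `(2k-1)‼ ≤ t^k` finishes.
-/

open Finset Nat

namespace Nat

theorem factorial_two_mul (n : ℕ) : (2 * n)! = (2 * n - 1)‼ * (2 ^ n * n !) := by
  rcases n with _ | n
  · rfl
  · rw [show 2 * (n + 1) = (2 * n + 1) + 1 by ring, factorial_eq_mul_doubleFactorial,
      show 2 * n + 1 + 1 = 2 * (n + 1) by ring, doubleFactorial_two_mul, mul_comm]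
    rfl

theorem choose_two_mul_mul_doubleFactorial (k j : ℕ) (hj : j ≤ k) :
    (2 * k).choose (2 * j) * (2 * j - 1)‼ * (2 * (k - j) - 1)‼ = (2 * k - 1)‼ * k.choose j := by
  have hpos : 0 < 2 ^ k * j ! * (k - j)! := by positivity
  apply Nat.eq_of_mul_eq_mul_right hpos
  have hsplit : 2 ^ k = 2 ^ j * 2 ^ (k - j) := by rw [← pow_add, Nat.add_sub_cancel' hj]
  calc (2 * k).choose (2 * j) * (2 * j - 1)‼ * (2 * (k - j) - 1)‼ * (2 ^ k * j ! * (k - j)!)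
      = (2 * k).choose (2 * j) * ((2 * j - 1)‼ * (2 ^ j * j !)) *
          ((2 * (k - j) - 1)‼ * (2 ^ (k - j) * (k - j)!)) := by rw [hsplit]; ring
    _ = (2 * k).choose (2 * j) * (2 * j)! * (2 * k - 2 * j)! := by
        rw [← factorial_two_mul, ← factorial_two_mul, Nat.mul_sub]
    _ = (2 * k - 1)‼ * (2 ^ k * (k.choose j * j ! * (k - j)!)) := by
        rw [choose_mul_factorial_mul_factorial (by omega), choose_mul_factorial_mul_factorial hj,
          factorial_two_mul]
    _ = (2 * k - 1)‼ * k.choose j * (2 ^ k * j ! * (k - j)!) := by ring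

theorem choose_two_mul_mul_doubleFactorial_le (k j : ℕ) (hj : j ≤ k) :
    (2 * k).choose (2 * j) * (2 * (k - j) - 1)‼ ≤ (2 * k - 1)‼ * k.choose j := by
  rw [← choose_two_mul_mul_doubleFactorial k j hj, mul_right_comm]
  exact Nat.le_mul_of_pos_right _ (doubleFactorial_pos _)

theorem doubleFactorial_two_mul_sub_one_le_pow (k : ℕ) : (2 * k - 1)‼ ≤ (2 * k - 1) ^ k := by
  induction k with
  | zero => rfl
  | succ k ih =>
    rw [show 2 * (k + 1) - 1 = 2 * k + 1 by omega, doubleFactorial_add_one, pow_succ']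
    exact Nat.mul_le_mul_left _ (ih.trans (Nat.pow_le_pow_left (by omega) k))

end Nat

theorem Finset.sum_range_two_mul_add_one_of_odd {M : Type*} [AddCommMonoid M] (g : ℕ → M)
    (hg : ∀ m, Odd m → g m = 0) (k : ℕ) :
    ∑ m ∈ range (2 * k + 1), g m = ∑ j ∈ range (k + 1), g (2 * j) := by
  induction k with
  | zero => simp
  | succ k ih =>
    rw [show 2 * (k + 1) + 1 = 2 * k + 1 + 1 + 1 by ring, sum_range_succ, sum_range_succ, ih,
      hg _ (odd_two_mul_add_one k), add_zero, sum_range_succ _ (k + 1)]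
    rfl

theorem add_pow_two_mul_add_sub_pow_two_mul {R : Type*} [CommRing R] (a b : R) (k : ℕ) :
    (a + b) ^ (2 * k) + (a - b) ^ (2 * k) =
      2 * ∑ j ∈ range (k + 1), (b ^ 2) ^ j * (2 * k).choose (2 * j) * a ^ (2 * (k - j)) := by
  have hodd : ∀ m, Odd m → (b ^ m + (-b) ^ m) * a ^ (2 * k - m) * (2 * k).choose m = 0 := by
    intro m hm
    rw [hm.neg_pow, add_neg_cancel, zero_mul, zero_mul]
  rw [add_comm a, sub_eq_add_neg, add_comm a, add_pow, add_pow, ← sum_add_distrib]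
  simp_rw [← add_mul]
  rw [sum_range_two_mul_add_one_of_odd _ hodd, mul_sum]
  refine sum_congr rfl fun j _ => ?_
  rw [(even_two_mul j).neg_pow, pow_mul, ← Nat.mul_sub]
  ring

theorem Fintype.sum_fin_succ_pi {α M : Type*} [Fintype α] [AddCommMonoid M] {d : ℕ}
    (f : (Fin (d + 1) → α) → M) : ∑ σ, f σ = ∑ b, ∑ τ : Fin d → α, f (Fin.cons b τ) := by
  rw [← (Fin.consEquiv fun _ => α).sum_comp, Fintype.sum_prod_type]
  rfl

def signedSum {d : ℕ} (x : Fin d → ℝ) (σ : Fin d → Bool) : ℝ :=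
  ∑ i, (if σ i then 1 else -1) * x i

theorem signedSum_cons {d : ℕ} (x : Fin (d + 1) → ℝ) (b : Bool) (τ : Fin d → Bool) :
    signedSum x (Fin.cons b τ) = (if b then 1 else -1) * x 0 + signedSum (Fin.tail x) τ := by
  simp [signedSum, Fin.sum_univ_succ, Fin.tail]

theorem sum_signedSum_pow_succ {d : ℕ} (x : Fin (d + 1) → ℝ) (n : ℕ) :
    ∑ σ, signedSum x σ ^ n =
      ∑ τ, ((signedSum (Fin.tail x) τ + x 0) ^ n + (signedSum (Fin.tail x) τ - x 0) ^ n) := by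
  rw [Fintype.sum_fin_succ_pi, Fintype.sum_bool, ← sum_add_distrib]
  refine sum_congr rfl fun τ _ => ?_
  simp only [signedSum_cons, if_true, Bool.false_eq_true, if_false]
  ring

theorem sum_signedSum_pow_two_mul_succ {d : ℕ} (x : Fin (d + 1) → ℝ) (k : ℕ) :
    ∑ σ, signedSum x σ ^ (2 * k) =
      2 * ∑ j ∈ range (k + 1), (x 0 ^ 2) ^ j * (2 * k).choose (2 * j) *
        ∑ τ, signedSum (Fin.tail x) τ ^ (2 * (k - j)) := by
  simp_rw [sum_signedSum_pow_succ, add_pow_two_mul_add_sub_pow_two_mul, ← mul_sum]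
  rw [sum_comm]
  simp_rw [mul_sum]

theorem sum_signedSum_pow_two_mul_le {d : ℕ} (x : Fin d → ℝ) (k : ℕ) :
    ∑ σ, signedSum x σ ^ (2 * k) ≤ 2 ^ d * ((2 * k - 1)‼ * (∑ i, x i ^ 2) ^ k) := by
  induction d generalizing k with
  | zero => rcases k with _ | k <;> simp [signedSum]
  | succ d ih =>
    set a := x 0
    set s := ∑ i, Fin.tail x i ^ 2
    have hterm (j : ℕ) (hj : j ≤ k) :
        (a ^ 2) ^ j * (2 * k).choose (2 * j) * ∑ τ, signedSum (Fin.tail x) τ ^ (2 * (k - j)) ≤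
          2 ^ d * ((2 * k - 1)‼ * ((a ^ 2) ^ j * s ^ (k - j) * k.choose j)) := by
      have hcomb : ((2 * k).choose (2 * j) * (2 * (k - j) - 1)‼ : ℝ) ≤ (2 * k - 1)‼ * k.choose j :=
        mod_cast choose_two_mul_mul_doubleFactorial_le k j hj
      calc (a ^ 2) ^ j * (2 * k).choose (2 * j) * ∑ τ, signedSum (Fin.tail x) τ ^ (2 * (k - j))
          ≤ (a ^ 2) ^ j * (2 * k).choose (2 * j) * (2 ^ d * ((2 * (k - j) - 1)‼ * s ^ (k - j))) :=
            by gcongr; exact ih _ _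
        _ = 2 ^ d * ((a ^ 2) ^ j * s ^ (k - j)) * ((2 * k).choose (2 * j) * (2 * (k - j) - 1)‼) :=
            by ring
        _ ≤ 2 ^ d * ((a ^ 2) ^ j * s ^ (k - j)) * ((2 * k - 1)‼ * k.choose j) := by gcongr
        _ = 2 ^ d * ((2 * k - 1)‼ * ((a ^ 2) ^ j * s ^ (k - j) * k.choose j)) := by ring
    calc ∑ σ, signedSum x σ ^ (2 * k)
        ≤ 2 * ∑ j ∈ range (k + 1),
            2 ^ d * ((2 * k - 1)‼ * ((a ^ 2) ^ j * s ^ (k - j) * k.choose j)) := by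
          rw [sum_signedSum_pow_two_mul_succ]
          exact mul_le_mul_of_nonneg_left
            (sum_le_sum fun j hj => hterm j (mem_range_succ_iff.mp hj)) zero_le_two
      _ = 2 ^ (d + 1) * ((2 * k - 1)‼ * (∑ i, x i ^ 2) ^ k) := by
          rw [Fin.sum_univ_succ, add_pow, ← mul_sum, ← mul_sum, ← mul_assoc, ← _root_.pow_succ']
          rfl

theorem Real.rpow_mean_rpow_le_of_le {ι : Type*} (s : Finset ι) (w z : ι → ℝ)
    (hw : ∀ i ∈ s, 0 ≤ w i) (hw' : ∑ i ∈ s, w i = 1) (hz : ∀ i ∈ s, 0 ≤ z i) {p q : ℝ}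
    (hp : 0 < p) (hpq : p ≤ q) :
    (∑ i ∈ s, w i * z i ^ p) ^ (1 / p) ≤ (∑ i ∈ s, w i * z i ^ q) ^ (1 / q) := by
  have hq : 0 < q := hp.trans_le hpq
  have hmean := Real.rpow_arith_mean_le_arith_mean_rpow s w (fun i => z i ^ p) hw hw'
    (fun i hi => Real.rpow_nonneg (hz i hi) p) ((one_le_div hp).mpr hpq)
  have hA : 0 ≤ ∑ i ∈ s, w i * z i ^ p :=
    sum_nonneg fun i hi => mul_nonneg (hw i hi) (Real.rpow_nonneg (hz i hi) p)
  calc (∑ i ∈ s, w i * z i ^ p) ^ (1 / p)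
      = ((∑ i ∈ s, w i * z i ^ p) ^ (q / p)) ^ (1 / q) := by
        rw [← Real.rpow_mul hA]; field_simp
    _ ≤ (∑ i ∈ s, w i * (z i ^ p) ^ (q / p)) ^ (1 / q) :=
        Real.rpow_le_rpow (by positivity) hmean (by positivity)
    _ = (∑ i ∈ s, w i * z i ^ q) ^ (1 / q) := by
        refine congrArg (· ^ (1 / q)) (sum_congr rfl fun i hi => ?_)
        rw [← Real.rpow_mul (hz i hi), mul_div_cancel₀ q hp.ne']

theorem sum_abs_pow_div_card_rpow_le {ι : Type*} [Fintype ι] [Nonempty ι] (f : ι → ℝ)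
    {p q : ℕ} (hp : 0 < p) (hpq : p ≤ q) :
    ((∑ i, |f i| ^ p) / Fintype.card ι) ^ (1 / (p : ℝ)) ≤
      ((∑ i, |f i| ^ q) / Fintype.card ι) ^ (1 / (q : ℝ)) := by
  have hw : ∑ _i : ι, (1 / Fintype.card ι : ℝ) = 1 := by simp
  have := Real.rpow_mean_rpow_le_of_le univ (fun _ => 1 / Fintype.card ι) (fun i => |f i|)
    (fun _ _ => by positivity) hw (fun i _ => abs_nonneg (f i)) (p := p) (q := q)
    (by exact_mod_cast hp) (by exact_mod_cast hpq)
  simpa only [Real.rpow_natCast, ← mul_sum, one_div_mul_eq_div, ← sum_div] using this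

/-- Khintchine's inequality: for independent Rademacher signs `σ` and `x ∈ ℝ^d`,
`(E[|⟨σ,x⟩|^t])^{1/t} ≤ √t · ‖x‖₂` for every integer `t ≥ 1`. -/
theorem khintchine (d : ℕ) (x : Fin d → ℝ) (t : ℕ) (ht : 1 ≤ t) :
    ((∑ σ : Fin d → Bool, |∑ i, (if σ i then (1 : ℝ) else -1) * x i| ^ t) / 2 ^ d)
        ^ ((1 : ℝ) / t)
      ≤ Real.sqrt t * Real.sqrt (∑ i, x i ^ 2) := by
  set s := ∑ i, x i ^ 2
  set k := (t + 1) / 2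
  have hcard : (Fintype.card (Fin d → Bool) : ℝ) = 2 ^ d := by simp
  have hk : 0 < k := by omega
  have hmoment : (∑ σ, |signedSum x σ| ^ (2 * k)) / 2 ^ d ≤ (t * s) ^ k := by
    simp only [(even_two_mul k).pow_abs]
    rw [div_le_iff₀' (by positivity), mul_pow]
    refine (sum_signedSum_pow_two_mul_le x k).trans ?_
    gcongr
    exact_mod_cast (doubleFactorial_two_mul_sub_one_le_pow k).trans
      (Nat.pow_le_pow_left (by omega) k)
  calc ((∑ σ, |signedSum x σ| ^ t) / 2 ^ d) ^ ((1 : ℝ) / t)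
      ≤ ((∑ σ, |signedSum x σ| ^ (2 * k)) / 2 ^ d) ^ (1 / ((2 * k : ℕ) : ℝ)) := by
        rw [← hcard]
        exact sum_abs_pow_div_card_rpow_le _ ht (by omega)
    _ ≤ ((t * s) ^ k) ^ (1 / ((2 * k : ℕ) : ℝ)) := by gcongr
    _ = Real.sqrt t * Real.sqrt s := by
        rw [← Real.sqrt_mul (Nat.cast_nonneg t), Real.sqrt_eq_rpow, ← Real.rpow_natCast,
          ← Real.rpow_mul (by positivity)]
        congr 1
        push_cast
        field_simp
end

section
/- Let X ∈ ℝ^{d×n}, K ∈ ℝ^{n×n} a PSD matrix with smallest eigenvalue λ_min, Σ ∈ ℝ^{d'×n}, and Y ∈ ℝ^{d×n} any matrix. Then ‖Y^{⊗q}·(Σ ⊗ K)ᵀ‖_F² ≥ λ_min²·‖Σ ⊗ Y^{⊗q}‖_F², where ⊗ on matrices is the column-wise tensor product and Y^{⊗q} is the q-fold column-wise self-tensor. -/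
/-!
In an orthonormal eigenbasis of the symmetric matrix `K`, the coordinates of `K v` are those of
`v` scaled by the eigenvalues, so Parseval gives `‖K v‖ ≥ λ_min ‖v‖` when `λ_min ≥ 0`.
The `(j, (i, m))` entry of `Y^{⊗q} (Σ ⊗ K)ᵀ` is `(K v)_m` for the row
`v_ℓ = Σ_{iℓ} ∏_a Y_{j_a ℓ}` of `Σ ⊗ Y^{⊗q}`, so summing this bound over all rows gives the claim.
-/

open Matrix WithLp

namespace Matrix

variable {n : Type*} [Fintype n] [DecidableEq n]

namespace IsHermitian

variable {𝕜 : Type*} [RCLike 𝕜] {A : Matrix n n 𝕜}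

theorem inner_eigenvectorBasis_mulVec (hA : A.IsHermitian) (x : EuclideanSpace 𝕜 n) (i : n) :
    inner 𝕜 (hA.eigenvectorBasis i) (toLp 2 (A *ᵥ ofLp x)) =
      hA.eigenvalues i * inner 𝕜 (hA.eigenvectorBasis i) x := by
  have hb : toLp 2 (A *ᵥ ofLp (hA.eigenvectorBasis i)) =
      (hA.eigenvalues i : 𝕜) • hA.eigenvectorBasis i := by
    rw [hA.mulVec_eigenvectorBasis, RCLike.real_smul_eq_coe_smul (K := 𝕜)]
    rfl
  rw [← toLpLin_apply (p := 2) (q := 2), ← isSymmetric_toEuclideanLin_iff.mpr hA,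
    toLpLin_apply, hb, inner_smul_left, RCLike.conj_ofReal]

theorem sq_mul_norm_sq_le_norm_mulVec_sq (hA : A.IsHermitian) {μ : ℝ} (hμ₀ : 0 ≤ μ)
    (hμ : ∀ i, μ ≤ |hA.eigenvalues i|) (x : EuclideanSpace 𝕜 n) :
    μ ^ 2 * ‖x‖ ^ 2 ≤ ‖toLp 2 (A *ᵥ ofLp x)‖ ^ 2 := by
  rw [← hA.eigenvectorBasis.sum_sq_norm_inner_right x,
    ← hA.eigenvectorBasis.sum_sq_norm_inner_right, Finset.mul_sum]
  refine Finset.sum_le_sum fun i _ => ?_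
  rw [inner_eigenvectorBasis_mulVec, norm_mul, mul_pow, RCLike.norm_ofReal]
  gcongr
  exact hμ i

theorem sq_mul_sum_sq_le_sum_mulVec_sq {A : Matrix n n ℝ} (hA : A.IsHermitian) {μ : ℝ}
    (hμ₀ : 0 ≤ μ) (hμ : ∀ i, μ ≤ |hA.eigenvalues i|) (v : n → ℝ) :
    μ ^ 2 * ∑ i, v i ^ 2 ≤ ∑ i, (A *ᵥ v) i ^ 2 := by
  simpa only [EuclideanSpace.real_norm_sq_eq] using
    hA.sq_mul_norm_sq_le_norm_mulVec_sq hμ₀ hμ (toLp 2 v)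

end IsHermitian

theorem PosSemidef.sq_iInf_eigenvalues_mul_sum_sq_le {A : Matrix n n ℝ} (hA : A.PosSemidef)
    (v : n → ℝ) : (⨅ i, hA.1.eigenvalues i) ^ 2 * ∑ i, v i ^ 2 ≤ ∑ i, (A *ᵥ v) i ^ 2 :=
  hA.1.sq_mul_sum_sq_le_sum_mulVec_sq (Real.iInf_nonneg hA.eigenvalues_nonneg)
    (fun i => (ciInf_le (Set.finite_range _).bddBelow i).trans (le_abs_self _)) v

end Matrix

theorem tensor_kernel_lower_bound_general {d d' n q : ℕ}
    (Y : Matrix (Fin d) (Fin n) ℝ) (Sg : Matrix (Fin d') (Fin n) ℝ)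
    (K : Matrix (Fin n) (Fin n) ℝ) (hK : K.PosSemidef) :
    (⨅ i, hK.1.eigenvalues i) ^ 2 *
        ∑ p : Fin d' × (Fin q → Fin d), ∑ ℓ : Fin n,
          (Sg p.1 ℓ * ∏ a, Y (p.2 a) ℓ) ^ 2
      ≤ ∑ j : Fin q → Fin d, ∑ p : Fin d' × Fin n,
          (∑ ℓ : Fin n, (∏ a, Y (j a) ℓ) * (Sg p.1 ℓ * K p.2 ℓ)) ^ 2 := by
  set w : Fin d' → (Fin q → Fin d) → Fin n → ℝ := fun i j ℓ => Sg i ℓ * ∏ a, Y (j a) ℓ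
  have hKw (i : Fin d') (j : Fin q → Fin d) (m : Fin n) :
      (K *ᵥ w i j) m = ∑ ℓ : Fin n, (∏ a, Y (j a) ℓ) * (Sg i ℓ * K m ℓ) := by
    simp only [mulVec, dotProduct, w]
    exact Finset.sum_congr rfl fun ℓ _ => by ring
  calc _ = ∑ j, ∑ i, (⨅ i, hK.1.eigenvalues i) ^ 2 * ∑ ℓ, w i j ℓ ^ 2 := by
        simp only [Fintype.sum_prod_type_right, Finset.mul_sum, w]
    _ ≤ ∑ j, ∑ i, ∑ m, (K *ᵥ w i j) m ^ 2 := by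
        gcongr with j _ i _
        exact hK.sq_iInf_eigenvalues_mul_sum_sq_le (w i j)
    _ = _ := by simp only [hKw, Fintype.sum_prod_type]

/-- For PSD `K` with smallest eigenvalue `λ_min`, `‖Y^{⊗q}(Σ ⊗ K)ᵀ‖_F² ≥ λ_min²·‖Σ ⊗ Y^{⊗q}‖_F²`,
where `⊗` is the column-wise tensor product and `Y^{⊗q}` the q-fold column-wise self-tensor. -/
theorem tensor_kernel_lower_bound {d d' n q : ℕ} (hn : 0 < n)
    (Y : Matrix (Fin d) (Fin n) ℝ) (Sg : Matrix (Fin d') (Fin n) ℝ)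
    (K : Matrix (Fin n) (Fin n) ℝ) (hK : K.PosSemidef) :
    (⨅ i, hK.1.eigenvalues i) ^ 2 *
        ∑ p : Fin d' × (Fin q → Fin d), ∑ ℓ : Fin n,
          (Sg p.1 ℓ * ∏ a, Y (p.2 a) ℓ) ^ 2
      ≤ ∑ j : Fin q → Fin d, ∑ p : Fin d' × Fin n,
          (∑ ℓ : Fin n, (∏ a, Y (j a) ℓ) * (Sg p.1 ℓ * K p.2 ℓ)) ^ 2 :=
  tensor_kernel_lower_bound_general Y Sg K hK
end

section
/- Let X ∈ ℝ^{d×n} with columns x₁,…,x_n, K PSD with largest eigenvalue λ_max, Σ ∈ ℝ^{d'×n}, and Y ∈ ℝ^{d×n}. For every row index j ∈ [d]^q, ‖[Y^{⊗q}·(Σ⊗K)ᵀ]_{j,⋆}‖₂² ≤ λ_max²·Σ_{ℓ=1}^n |[y_ℓ^{⊗q}](j)|²·‖Σ_{⋆,ℓ}‖₂², where y_ℓ is the ℓ-th column of Y. -/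
open Matrix
open scoped MatrixOrder

/-
Entry `(b, i)` of `Y^{⊗q}(Σ ⊗ K)ᵀ` in row `j` is the entry `(b, i)` of `A Kᵀ` with
`A = Σ · diag([Y^{⊗q}]_{j,⋆})`, so the claim is `‖A Kᵀ‖_F² ≤ λ_max² ‖A‖_F²`. Row by row this is
`‖K v‖² ≤ λ_max² ‖v‖²`, which follows from the Loewner bound `K² ≤ λ_max² • 1`: by the
functional calculus, `K²` and `λ_max² • 1` are `x ↦ x²` and `x ↦ λ_max²` applied to `K`, and the
first is below the second on the spectrum of `K`, which lies in `[0, λ_max]`.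
-/

namespace Matrix

lemma IsHermitian.mul_self_le_algebraMap {𝕜 ι : Type*} [RCLike 𝕜] [Fintype ι] [DecidableEq ι]
    {K : Matrix ι ι 𝕜} (hK : K.IsHermitian) {c : ℝ} (hc : ∀ i, |hK.eigenvalues i| ≤ c) :
    K * K ≤ algebraMap ℝ (Matrix ι ι 𝕜) (c ^ 2) := by
  rw [← sq, ← cfc_pow_id (R := ℝ) K 2 hK, ← cfc_const (c ^ 2) K hK]
  refine cfc_mono fun x hx => ?_
  rw [hK.spectrum_real_eq_range_eigenvalues] at hx
  obtain ⟨i, rfl⟩ := hx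
  exact sq_le_sq' (abs_le.1 (hc i)).1 (abs_le.1 (hc i)).2

lemma IsHermitian.mulVec_dotProduct_mulVec_le {ι : Type*} [Fintype ι] [DecidableEq ι]
    {K : Matrix ι ι ℝ} (hK : K.IsHermitian) {c : ℝ} (hc : ∀ i, |hK.eigenvalues i| ≤ c)
    (v : ι → ℝ) :
    K *ᵥ v ⬝ᵥ K *ᵥ v ≤ c ^ 2 * (v ⬝ᵥ v) := by
  have hquad := (le_iff.1 (hK.mul_self_le_algebraMap hc)).dotProduct_mulVec_nonneg v
  have hKt : Kᵀ = K := by simpa using hK.eq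
  rw [Algebra.algebraMap_eq_smul_one, sub_mulVec, smul_mulVec, one_mulVec, dotProduct_sub,
    dotProduct_smul, ← mulVec_mulVec, dotProduct_mulVec, ← hKt, vecMul_transpose, hKt] at hquad
  simpa [sub_nonneg] using hquad

lemma IsHermitian.sum_sq_mul_transpose_le {m ι : Type*} [Fintype m] [Fintype ι] [DecidableEq ι]
    {K : Matrix ι ι ℝ} (hK : K.IsHermitian) {c : ℝ} (hc : ∀ i, |hK.eigenvalues i| ≤ c)
    (A : Matrix m ι ℝ) :
    ∑ b, ∑ i, (A * Kᵀ) b i ^ 2 ≤ c ^ 2 * ∑ b, ∑ ℓ, A b ℓ ^ 2 := by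
  rw [Finset.mul_sum]
  refine Finset.sum_le_sum fun b _ => ?_
  have hrow : (A * Kᵀ) b = K *ᵥ A b := by
    ext i
    simp only [mul_apply, transpose_apply, mulVec, dotProduct, mul_comm]
  simpa only [hrow, dotProduct, sq] using hK.mulVec_dotProduct_mulVec_le hc (A b)

lemma PosSemidef.abs_eigenvalues_le_iSup {ι : Type*} [Fintype ι] [DecidableEq ι]
    {K : Matrix ι ι ℝ} (hK : K.PosSemidef) (i : ι) :
    |hK.1.eigenvalues i| ≤ ⨆ k, hK.1.eigenvalues k := by
  rw [abs_of_nonneg (hK.eigenvalues_nonneg i)]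
  exact le_ciSup (Set.finite_range _).bddAbove i

end Matrix

theorem tensor_kernel_row_upper_bound_general {d d' n q : ℕ}
    (Y : Matrix (Fin d) (Fin n) ℝ) (Sg : Matrix (Fin d') (Fin n) ℝ)
    (K : Matrix (Fin n) (Fin n) ℝ) (hK : K.PosSemidef) (j : Fin q → Fin d) :
    ∑ p : Fin d' × Fin n, (∑ ℓ : Fin n, (∏ a, Y (j a) ℓ) * (Sg p.1 ℓ * K p.2 ℓ)) ^ 2
      ≤ (⨆ i, hK.1.eigenvalues i) ^ 2 *
          ∑ ℓ : Fin n, (∏ a, Y (j a) ℓ) ^ 2 * ∑ b : Fin d', Sg b ℓ ^ 2 := by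
  set y : Fin n → ℝ := fun ℓ => ∏ a, Y (j a) ℓ
  have hentry : ∀ b i, (Sg * diagonal y * Kᵀ) b i = ∑ ℓ, y ℓ * (Sg b ℓ * K i ℓ) := fun b i => by
    simp only [mul_apply (M := Sg * diagonal y), mul_diagonal, transpose_apply]
    exact Finset.sum_congr rfl fun ℓ _ => by ring
  have hnorm : ∑ b, ∑ ℓ, (Sg * diagonal y) b ℓ ^ 2 = ∑ ℓ, y ℓ ^ 2 * ∑ b, Sg b ℓ ^ 2 := by
    simp only [mul_diagonal, mul_pow, Finset.mul_sum]
    rw [Finset.sum_comm]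
    exact Finset.sum_congr rfl fun ℓ _ => Finset.sum_congr rfl fun b _ => mul_comm _ _
  calc ∑ p : Fin d' × Fin n, (∑ ℓ, y ℓ * (Sg p.1 ℓ * K p.2 ℓ)) ^ 2
      = ∑ b, ∑ i, (Sg * diagonal y * Kᵀ) b i ^ 2 := by
        simp only [Fintype.sum_prod_type, hentry]
    _ ≤ _ := hK.1.sum_sq_mul_transpose_le hK.abs_eigenvalues_le_iSup _
    _ = _ := by rw [hnorm]

/-- For PSD `K` with largest eigenvalue `λ_max`, each row `j ∈ [d]^q` of
`Y^{⊗q}(Σ ⊗ K)ᵀ` satisfies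
`‖[Y^{⊗q}(Σ⊗K)ᵀ]_{j,⋆}‖₂² ≤ λ_max² · Σ_ℓ |[y_ℓ^{⊗q}](j)|²·‖Σ_{⋆,ℓ}‖₂²`. -/
theorem tensor_kernel_row_upper_bound {d d' n q : ℕ} (hn : 0 < n)
    (Y : Matrix (Fin d) (Fin n) ℝ) (Sg : Matrix (Fin d') (Fin n) ℝ)
    (K : Matrix (Fin n) (Fin n) ℝ) (hK : K.PosSemidef) (j : Fin q → Fin d) :
    ∑ p : Fin d' × Fin n, (∑ ℓ : Fin n, (∏ a, Y (j a) ℓ) * (Sg p.1 ℓ * K p.2 ℓ)) ^ 2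
      ≤ (⨆ i, hK.1.eigenvalues i) ^ 2 *
          ∑ ℓ : Fin n, (∏ a, Y (j a) ℓ) ^ 2 * ∑ b : Fin d', Sg b ℓ ^ 2 :=
  tensor_kernel_row_upper_bound_general Y Sg K hK j
end

section
/- For every q ≥ 1, the tail of the series with terms a_ℓ = (2ℓ+3)·(2ℓ)! / (2^{2ℓ}·(ℓ!)²·(2ℓ+1)·(2ℓ+2)) satisfies a_ℓ ≤ 1/(2ℓ^{3/2}) for every ℓ ≥ 1, and therefore Σ_{ℓ=q+1}^∞ a_ℓ ≤ 1/√q. -/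
/-- The Taylor coefficients (beyond the constant and linear terms, up to the `1/π`
factor) of the NTK angular function `k_ntk`. -/
noncomputable def antk (ℓ : ℕ) : ℝ :=
  ((2 * ℓ + 3 : ℕ) : ℝ) * ((2 * ℓ).factorial : ℝ) /
    (2 ^ (2 * ℓ) * ((ℓ.factorial : ℝ)) ^ 2 * ((2 * ℓ + 1 : ℕ) : ℝ) * ((2 * ℓ + 2 : ℕ) : ℝ))

lemma centralBinom_sq_bound (n : ℕ) : n.centralBinom ^ 2 * (3 * n + 1) ≤ 16 ^ n := by
  induction n with
  | zero => simp [Nat.centralBinom]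
  | succ n ih =>
      have key := Nat.succ_mul_centralBinom_succ n
      have h1 : (n + 1) ^ 2 * ((n + 1).centralBinom ^ 2 * (3 * (n + 1) + 1))
          = 4 * (2 * n + 1) ^ 2 * (3 * n + 4) * n.centralBinom ^ 2 := by
        have : ((n + 1) * (n + 1).centralBinom) ^ 2 = (2 * (2 * n + 1) * n.centralBinom) ^ 2 := by
          rw [key]
        ring_nf at this ⊢
        nlinarith [this]
      have h2 : 4 * (2 * n + 1) ^ 2 * (3 * n + 4) * n.centralBinom ^ 2
          ≤ 16 * (n + 1) ^ 2 * ((3 * n + 1) * n.centralBinom ^ 2) := by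
        have : (2 * n + 1) ^ 2 * (3 * n + 4) ≤ 4 * (n + 1) ^ 2 * (3 * n + 1) := by nlinarith
        nlinarith [Nat.zero_le (n.centralBinom ^ 2), Nat.mul_le_mul_right (n.centralBinom ^ 2) this]
      have h3 : 16 * (n + 1) ^ 2 * ((3 * n + 1) * n.centralBinom ^ 2)
          ≤ (n + 1) ^ 2 * 16 ^ (n + 1) := by
        have := Nat.mul_le_mul_left (16 * (n + 1) ^ 2) (by linarith [ih] : n.centralBinom ^ 2 * (3 * n + 1) ≤ 16 ^ n)
        calc 16 * (n + 1) ^ 2 * ((3 * n + 1) * n.centralBinom ^ 2)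
            = 16 * (n + 1) ^ 2 * (n.centralBinom ^ 2 * (3 * n + 1)) := by ring
          _ ≤ 16 * (n + 1) ^ 2 * 16 ^ n := this
          _ = (n + 1) ^ 2 * 16 ^ (n + 1) := by ring
      have := h1 ▸ (le_trans h2 h3)
      exact Nat.le_of_mul_le_mul_left this (by positivity)

/-- `√(3n+1) * centralBinom n ≤ 4^n` in `ℝ`. -/
lemma centralBinom_real_bound (n : ℕ) :
    Real.sqrt (3 * n + 1) * (n.centralBinom : ℝ) ≤ 4 ^ n := by
  have h : ((n.centralBinom : ℝ)) ^ 2 * (3 * n + 1) ≤ 16 ^ n := by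
    have := centralBinom_sq_bound n
    calc ((n.centralBinom : ℝ)) ^ 2 * (3 * n + 1)
        = ((n.centralBinom ^ 2 * (3 * n + 1) : ℕ) : ℝ) := by push_cast; ring
      _ ≤ ((16 ^ n : ℕ) : ℝ) := by exact_mod_cast Nat.cast_le.mpr this
      _ = 16 ^ n := by push_cast; ring
  have hnn : (0:ℝ) ≤ 3 * n + 1 := by positivity
  have : Real.sqrt (3 * n + 1) * (n.centralBinom : ℝ)
      = Real.sqrt ((3 * n + 1) * ((n.centralBinom : ℝ)) ^ 2) := by
    rw [Real.sqrt_mul hnn, Real.sqrt_sq (by positivity)]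
  rw [this]
  have h16 : (16:ℝ) ^ n = ((4:ℝ) ^ n) ^ 2 := by
    rw [← pow_mul, mul_comm n 2, pow_mul]; norm_num
  calc Real.sqrt ((3 * n + 1) * ((n.centralBinom : ℝ)) ^ 2)
      ≤ Real.sqrt (((4:ℝ) ^ n) ^ 2) := by
        apply Real.sqrt_le_sqrt; rw [← h16]; linarith
    _ = 4 ^ n := Real.sqrt_sq (by positivity)

lemma antk_le (ℓ : ℕ) (hℓ : 1 ≤ ℓ) : antk ℓ ≤ 1 / (2 * (ℓ : ℝ) ^ ((3 : ℝ) / 2)) := by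
  have hL1 : (1:ℝ) ≤ (ℓ:ℝ) := by exact_mod_cast hℓ
  have hL0 : (0:ℝ) ≤ (ℓ:ℝ) := by linarith
  -- rewrite the rpow
  have hrpow : (ℓ : ℝ) ^ ((3 : ℝ) / 2) = (ℓ:ℝ) * Real.sqrt ℓ := by
    have : ((3:ℝ)/2) = 1 + 1/2 := by norm_num
    rw [this, Real.rpow_add' hL0 (by norm_num), Real.rpow_one, ← Real.sqrt_eq_rpow]
  -- rewrite antk in terms of the central binomial coefficient
  have hfact : ((2 * ℓ).factorial : ℝ) = (ℓ.centralBinom : ℝ) * (ℓ.factorial : ℝ) ^ 2 := by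
    have h := Nat.choose_mul_factorial_mul_factorial (Nat.le_mul_of_pos_left ℓ (by norm_num) : ℓ ≤ 2 * ℓ)
    have h2 : 2 * ℓ - ℓ = ℓ := by omega
    rw [h2] at h
    rw [Nat.centralBinom, ← h]; push_cast; ring
  have hpow : (2:ℝ) ^ (2 * ℓ) = 4 ^ ℓ := by
    rw [pow_mul]; norm_num
  set c : ℝ := (ℓ.centralBinom : ℝ) with hc
  set s : ℝ := Real.sqrt ℓ with hs
  set t : ℝ := Real.sqrt (3 * ℓ + 1) with ht
  have hs0 : 0 ≤ s := Real.sqrt_nonneg _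
  have hc0 : 0 ≤ c := Nat.cast_nonneg _
  have hst : s ≤ t := Real.sqrt_le_sqrt (by push_cast; linarith)
  have hct : t * c ≤ 4 ^ ℓ := centralBinom_real_bound ℓ
  have hL : (0:ℝ) < (ℓ:ℝ) := by linarith
  rw [antk, hfact, hpow, hrpow]
  rw [div_le_div_iff₀ (by positivity) (by positivity)]
  push_cast
  have h1 : 2 * (ℓ:ℝ) * (2 * ℓ + 3) ≤ (2 * ℓ + 1) * (2 * ℓ + 2) := by nlinarith
  have h2 : c * s ≤ c * t := mul_le_mul_of_nonneg_left hst hc0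
  have h3 : c * t ≤ 4 ^ ℓ := by linarith [hct, mul_comm t c]
  have key : (2 * (ℓ:ℝ) * (2 * ℓ + 3)) * (c * s) ≤ ((2 * ℓ + 1) * (2 * ℓ + 2)) * (4 ^ ℓ) :=
    mul_le_mul h1 (le_trans h2 h3) (by positivity) (by positivity)
  nlinarith [key]

lemma antk_nonneg (n : ℕ) : 0 ≤ antk n := by
  rw [antk]; positivity

lemma telescope_step (q k : ℕ) (hq : 1 ≤ q) :
    antk (q + 1 + k) ≤ 1 / Real.sqrt ((q : ℝ) + k) - 1 / Real.sqrt ((q : ℝ) + (k + 1)) := by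
  set a : ℝ := Real.sqrt ((q : ℝ) + k) with ha
  set b : ℝ := Real.sqrt ((q : ℝ) + (k + 1)) with hb
  have hq1 : (1:ℝ) ≤ (q:ℝ) := by exact_mod_cast hq
  have hk0 : (0:ℝ) ≤ (k:ℝ) := Nat.cast_nonneg _
  have ha1 : (1:ℝ) ≤ a := by
    rw [ha, show (1:ℝ) = Real.sqrt 1 by simp]
    exact Real.sqrt_le_sqrt (by linarith)
  have ha2 : a ^ 2 = (q:ℝ) + k := Real.sq_sqrt (by linarith)
  have hb2 : b ^ 2 = (q:ℝ) + (k + 1) := Real.sq_sqrt (by linarith)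
  have hab : a ≤ b := Real.sqrt_le_sqrt (by linarith)
  have ha0 : (0:ℝ) < a := by linarith
  have hb0 : (0:ℝ) < b := by linarith
  have hb1 : (1:ℝ) ≤ b := le_trans ha1 hab
  have hL : ((q + 1 + k : ℕ) : ℝ) = (q:ℝ) + (k + 1) := by push_cast; ring
  have hrpow : ((q + 1 + k : ℕ) : ℝ) ^ ((3 : ℝ) / 2) = b ^ 3 := by
    rw [hL, show ((3:ℝ)/2) = 1 + 1/2 by norm_num,
      Real.rpow_add' (by linarith) (by norm_num), Real.rpow_one, ← Real.sqrt_eq_rpow, ← hb]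
    nlinarith [hb2]
  have h1 := antk_le (q + 1 + k) (by omega)
  rw [hrpow] at h1
  refine le_trans h1 ?_
  have hdiff : 1 / a - 1 / b = (b - a) / (a * b) := by
    field_simp
  rw [hdiff, div_le_div_iff₀ (by positivity) (by positivity)]
  have h4 : (b - a) * (b + a) = 1 := by nlinarith [ha2, hb2]
  have h5 : a * b * (a + b) ≤ 2 * b ^ 3 := by nlinarith [mul_le_mul_of_nonneg_right hab hb0.le, sq_nonneg (b - a)]
  have h6 : (0:ℝ) ≤ b - a := by linarith
  have h7 := mul_le_mul_of_nonneg_left h5 h6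
  have h9 : (b - a) * (a * b * (a + b)) = a * b := by linear_combination (a * b) * h4
  nlinarith [h7, h9]

/-- `a_ℓ ≤ 1/(2ℓ^{3/2})` for every `ℓ ≥ 1`, and hence `Σ_{ℓ=q+1}^∞ a_ℓ ≤ 1/√q`
for every `q ≥ 1`. -/
theorem ntk_coefficient_tail_bound :
    (∀ ℓ : ℕ, 1 ≤ ℓ → antk ℓ ≤ 1 / (2 * (ℓ : ℝ) ^ ((3 : ℝ) / 2))) ∧
      ∀ q : ℕ, 1 ≤ q → (∑' k : ℕ, antk (q + 1 + k)) ≤ 1 / Real.sqrt q := by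
  refine ⟨antk_le, fun q hq => ?_⟩
  set g : ℕ → ℝ := fun k => 1 / Real.sqrt ((q : ℝ) + k) with hg
  apply Real.tsum_le_of_sum_range_le (fun n => antk_nonneg _)
  intro n
  have hq1 : (1:ℝ) ≤ (q:ℝ) := by exact_mod_cast hq
  calc ∑ i ∈ Finset.range n, antk (q + 1 + i)
      ≤ ∑ i ∈ Finset.range n, (g i - g (i + 1)) := by
        apply Finset.sum_le_sum
        intro i _
        have := telescope_step q i hq
        simpa [hg] using this
    _ = g 0 - g n := Finset.sum_range_sub' g n
    _ ≤ g 0 := by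
        have : 0 ≤ g n := by positivity
        linarith
    _ = 1 / Real.sqrt q := by simp [hg]
end
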